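/- arXiv:2602.20753 — 3 statements merged into one kernel-verified Lean document; each statement's English description precedes it below -/
import Mathlib

section
/- Let A ∈ M_{2n}(ℝ) be positive definite and suppose Wᵀ A W = D ⊕ D, where W is symplectic and D = diag(δ₁,…,δ_n) with δ_j > 0 (Williamson's theorem). Then the complex eigenvalues of J_{2n} A are exactly ± i δ₁, …, ± i δ_n; in particular, the moduli of the eigenvalues of J_{2n} A are the symplectic eigenvalues δ₁, …, δ_n of A. -/
/-
Since `W` is symplectic, `W J Wᵀ = J`; as `charpoly (X Y) = charpoly (Y X)`, the matrix
`J (Wᵀ A W) = (J Wᵀ A) W` has the same characteristic polynomial as `W J Wᵀ A = J A`. So `J A` has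
the eigenvalues of `J (D ⊕ D) = [[0, D], [-D, 0]]`, which over `ℂ` is diagonalised by
`[[1, 1], [i, -i]]` with eigenvalues `± i δⱼ`.
-/

open Matrix Finset

noncomputable section

/-- The standard symplectic form matrix over index type `ι ⊕ ι`. -/
def Jm (ι : Type*) [DecidableEq ι] : Matrix (ι ⊕ ι) (ι ⊕ ι) ℝ :=
  Matrix.fromBlocks 0 1 (-1) 0

/-- `W` is symplectic if `Wᵀ J W = J`. -/
def IsSymplectic {ι : Type*} [Fintype ι] [DecidableEq ι] (W : Matrix (ι ⊕ ι) (ι ⊕ ι) ℝ) : Prop :=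
  Wᵀ * Jm ι * W = Jm ι


/-- Multiset of moduli of the complex eigenvalues of `J * A`; each symplectic
eigenvalue of `A` occurs twice in this multiset. -/
def sympModuli {ι : Type*} [Fintype ι] [DecidableEq ι] (A : Matrix (ι ⊕ ι) (ι ⊕ ι) ℝ) :
    Multiset ℝ :=
  (((Jm ι * A).map (Complex.ofReal ·)).charpoly.roots).map (fun z : ℂ => ‖z‖)

theorem Matrix.roots_charpoly_diagonal {m R : Type*} [Fintype m] [DecidableEq m] [CommRing R]
    [IsDomain R] (d : m → R) : (diagonal d).charpoly.roots = univ.val.map d := by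
  have h := Polynomial.roots_multiset_prod_X_sub_C (univ.val.map d)
  rw [Multiset.map_map] at h
  rw [charpoly_diagonal, Finset.prod_eq_multiset_prod]
  exact h

theorem Finset.univ_val_map_sumElim {α β γ : Type*} [Fintype α] [Fintype β]
    (f : α → γ) (g : β → γ) :
    (univ : Finset (α ⊕ β)).val.map (Sum.elim f g) = univ.val.map f + univ.val.map g := by
  rw [← univ_disjSum_univ, val_disjSum, Multiset.disjSum, Multiset.map_add, Multiset.map_map,
    Multiset.map_map]
  rfl

theorem Jm_eq_neg_J (ι : Type*) [DecidableEq ι] : Jm ι = -J ι ℝ := by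
  rw [Jm, J, fromBlocks_neg, neg_zero, neg_neg]

variable {ι : Type*} [Fintype ι] [DecidableEq ι]

theorem isSymplectic_iff_mem_symplecticGroup {W : Matrix (ι ⊕ ι) (ι ⊕ ι) ℝ} :
    IsSymplectic W ↔ W ∈ symplecticGroup ι ℝ := by
  rw [SymplecticGroup.mem_iff', IsSymplectic, Jm_eq_neg_J, Matrix.mul_neg, Matrix.neg_mul,
    neg_inj]

theorem IsSymplectic.mul_Jm_mul_transpose {W : Matrix (ι ⊕ ι) (ι ⊕ ι) ℝ} (hW : IsSymplectic W) :
    W * Jm ι * Wᵀ = Jm ι := by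
  have h := SymplecticGroup.mem_iff.mp (isSymplectic_iff_mem_symplecticGroup.mp hW)
  rw [Jm_eq_neg_J, Matrix.mul_neg, Matrix.neg_mul, h]

theorem IsSymplectic.charpoly_Jm_mul_congr {W : Matrix (ι ⊕ ι) (ι ⊕ ι) ℝ} (hW : IsSymplectic W)
    (A : Matrix (ι ⊕ ι) (ι ⊕ ι) ℝ) : (Jm ι * (Wᵀ * A * W)).charpoly = (Jm ι * A).charpoly := by
  rw [← Matrix.mul_assoc, ← Matrix.mul_assoc, charpoly_mul_comm, ← Matrix.mul_assoc,
    ← Matrix.mul_assoc, hW.mul_Jm_mul_transpose]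

theorem Jm_mul_fromBlocks_diagonal (d : ι → ℝ) :
    Jm ι * fromBlocks (diagonal d) 0 0 (diagonal d) =
      fromBlocks 0 (diagonal d) (-diagonal d) 0 := by
  rw [Jm, fromBlocks_multiply]
  simp

theorem charpoly_fromBlocks_skew_diagonal (d : ι → ℂ) :
    (fromBlocks 0 (diagonal d) (-diagonal d) 0).charpoly =
      (diagonal (Sum.elim (fun j => d j * Complex.I) (fun j => -(d j * Complex.I)))).charpoly := by
  set Λ := diagonal (Sum.elim (fun j => d j * Complex.I) (fun j => -(d j * Complex.I))) with hΛ
  -- the columns of `P` are the eigenvectors `(eⱼ, i eⱼ)` and `(eⱼ, -i eⱼ)`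
  set P : Matrix (ι ⊕ ι) (ι ⊕ ι) ℂ :=
    fromBlocks 1 1 (diagonal fun _ => Complex.I) (diagonal fun _ => -Complex.I)
  have hP : IsUnit P.det := by
    rw [det_fromBlocks_one₁₁, Matrix.mul_one, diagonal_sub, det_diagonal, prod_const]
    exact (IsUnit.mk0 _ (by norm_num [Complex.ext_iff])).pow _
  have hconj : fromBlocks 0 (diagonal d) (-diagonal d) 0 * P = P * Λ := by
    rw [hΛ, ← fromBlocks_diagonal, fromBlocks_multiply, fromBlocks_multiply]
    simp [diagonal_mul_diagonal, mul_left_comm Complex.I]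
  have hsimilar : fromBlocks 0 (diagonal d) (-diagonal d) 0 = P * Λ * P⁻¹ := by
    rw [← hconj, Matrix.mul_nonsing_inv_cancel_right _ _ hP]
  rw [hsimilar]
  exact charpoly_units_conj (P.nonsingInvUnit hP) Λ

theorem eigenvalues_JA_general {n : ℕ} (A W : Matrix (Fin n ⊕ Fin n) (Fin n ⊕ Fin n) ℝ)
    (δ : Fin n → ℝ) (hδ : ∀ j, 0 < δ j) (hW : IsSymplectic W)
    (hWAW : Wᵀ * A * W =
      Matrix.fromBlocks (Matrix.diagonal δ) 0 0 (Matrix.diagonal δ)) :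
    ((Jm (Fin n) * A).map (Complex.ofReal ·)).charpoly.roots =
        (Finset.univ.val.map fun j => (δ j : ℂ) * Complex.I) +
        (Finset.univ.val.map fun j => -((δ j : ℂ) * Complex.I)) ∧
    sympModuli A = (Finset.univ.val.map δ) + (Finset.univ.val.map δ) := by
  have hroots : ((Jm (Fin n) * A).map (Complex.ofReal ·)).charpoly.roots =
      (univ.val.map fun j => (δ j : ℂ) * Complex.I) +
        univ.val.map fun j => -((δ j : ℂ) * Complex.I) := calc
    _ = ((Jm (Fin n) * (Wᵀ * A * W)).charpoly.map Complex.ofRealHom).roots := by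
      rw [hW.charpoly_Jm_mul_congr, ← charpoly_map]
      rfl
    _ = (charpoly <| fromBlocks 0 (diagonal fun j => (δ j : ℂ))
          (-diagonal fun j => (δ j : ℂ)) 0).roots := by
      rw [hWAW, Jm_mul_fromBlocks_diagonal, ← charpoly_map]
      simp [fromBlocks_map, diagonal_map]
    _ = _ := by
      rw [charpoly_fromBlocks_skew_diagonal, roots_charpoly_diagonal, univ_val_map_sumElim]
  refine ⟨hroots, ?_⟩
  rw [sympModuli, hroots, Multiset.map_add, Multiset.map_map, Multiset.map_map]
  congr 1 <;> refine Multiset.map_congr rfl fun j _ => ?_ <;> simp [abs_of_pos (hδ j)]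

theorem eigenvalues_JA {n : ℕ} (A W : Matrix (Fin n ⊕ Fin n) (Fin n ⊕ Fin n) ℝ)
    (δ : Fin n → ℝ) (hA : A.PosDef) (hδ : ∀ j, 0 < δ j) (hW : IsSymplectic W)
    (hWAW : Wᵀ * A * W =
      Matrix.fromBlocks (Matrix.diagonal δ) 0 0 (Matrix.diagonal δ)) :
    ((Jm (Fin n) * A).map (Complex.ofReal ·)).charpoly.roots =
        (Finset.univ.val.map fun j => (δ j : ℂ) * Complex.I) +
        (Finset.univ.val.map fun j => -((δ j : ℂ) * Complex.I)) ∧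
    sympModuli A = (Finset.univ.val.map δ) + (Finset.univ.val.map δ) :=
  eigenvalues_JA_general A W δ hδ hW hWAW
end
end

section
/- For every generalized mean M and every r ≥ 1, there exist real numbers p, q, u, v with ps − qu = 1 (i.e., an element of SL(2,ℝ)) such that M(p² + q², u² + s²) = r. Equivalently, the image of SL(2,ℝ) under the map [[p,q],[u,s]] ↦ M(p²+q², u²+s²) contains [1, ∞). -/
open Matrix Finset

noncomputable section

/-- A generalized mean: positive, continuous on `(0,∞)²`, symmetric, positively
homogeneous, monotone in each argument, and between its arguments. -/
structure IsGenMean (M : ℝ → ℝ → ℝ) : Prop where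
  pos : ∀ a b : ℝ, 0 < a → 0 < b → 0 < M a b
  cont : ContinuousOn (fun p : ℝ × ℝ => M p.1 p.2) (Set.Ioi (0:ℝ) ×ˢ Set.Ioi (0:ℝ))
  symm : ∀ a b : ℝ, 0 < a → 0 < b → M a b = M b a
  homog : ∀ a b r : ℝ, 0 < a → 0 < b → 0 < r → M (r * a) (r * b) = r * M a b
  mono : ∀ a a' b b' : ℝ, 0 < a → 0 < b → a ≤ a' → b ≤ b' → M a b ≤ M a' b'
  between : ∀ a b : ℝ, 0 < a → a ≤ b → a ≤ M a b ∧ M a b ≤ b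

/-- `x` is weakly supermajorized by `y` (`x ≺^w y`): for every `k`, the sum of the
`k` smallest entries of `x` is at least the sum of the `k` smallest entries of `y`. -/
def SupermajW {n : ℕ} (x y : Fin n → ℝ) : Prop :=
  ∀ k : ℕ, k ≤ n →
    ∑ j ∈ Finset.univ.filter (fun j : Fin n => (j : ℕ) < k), y (Tuple.sort y j) ≤
    ∑ j ∈ Finset.univ.filter (fun j : Fin n => (j : ℕ) < k), x (Tuple.sort x j)

/-!
Every mean is reflexive, `M(r, r) = r`, so it suffices to find an element of `SL(2,ℝ)` whose two
rows have the same squared norm `r`. The hyperbolic rotation `[[cosh x, sinh x], [sinh x, cosh x]]`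
has both squared row norms equal to `cosh 2x`, which takes every value in `[1, ∞)`.
-/

theorem IsGenMean.apply_self {M : ℝ → ℝ → ℝ} (hM : IsGenMean M) {a : ℝ} (ha : 0 < a) :
    M a a = a :=
  le_antisymm (hM.between a a ha le_rfl).2 (hM.between a a ha le_rfl).1

theorem exists_det_eq_one_and_row_sq_norms_eq {r : ℝ} (hr : 1 ≤ r) :
    ∃ p q u s : ℝ, p * s - q * u = 1 ∧ p ^ 2 + q ^ 2 = r ∧ u ^ 2 + s ^ 2 = r := by
  -- `p = cosh x`, `q = sinh x` with `cosh 2x = r`, written through `cosh² x = (r + 1) / 2`.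
  have hc : √((r + 1) / 2) ^ 2 = (r + 1) / 2 := Real.sq_sqrt (by linarith)
  have hs : √((r - 1) / 2) ^ 2 = (r - 1) / 2 := Real.sq_sqrt (by linarith)
  refine ⟨√((r + 1) / 2), √((r - 1) / 2), √((r - 1) / 2), √((r + 1) / 2), ?_, ?_, ?_⟩ <;>
    nlinarith [hc, hs]

theorem mean_SL2_surjective_onto_Ici_one (M : ℝ → ℝ → ℝ) (hM : IsGenMean M)
    (r : ℝ) (hr : 1 ≤ r) :
    ∃ p q u s : ℝ, p * s - q * u = 1 ∧ M (p ^ 2 + q ^ 2) (u ^ 2 + s ^ 2) = r := by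
  obtain ⟨p, q, u, s, hdet, hpq, hus⟩ := exists_det_eq_one_and_row_sq_norms_eq hr
  exact ⟨p, q, u, s, hdet, by rw [hpq, hus, hM.apply_self (by linarith)]⟩
end
end

section
/- Let A ∈ M_{2n}(ℝ) be positive definite with 2×2 block form [[A₁₁, A₁₂],[A₁₂ᵀ, A₂₂]], and let α_j, β_j, γ_j be the j-th diagonal entries of A₁₁, A₁₂, A₂₂ respectively. Then the s-pinching C^s(A) = ⊞_{j=1}^n [[α_j, β_j],[β_j, γ_j]] is positive definite and its symplectic eigenvalues are √(α_j γ_j − β_j²) for j = 1,…,n. -/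
/-!
Reindexing `ι ⊕ ι` as `Fin 2 × ι` turns an expanding sum of `2 × 2` blocks into a block-diagonal
matrix, and turns `J` into the expanding sum of copies of `J₂ = !![0, 1; -1, 0]`. Hence the pinching
`C` is block diagonal with blocks `Bⱼ = !![αⱼ, βⱼ; βⱼ, γⱼ]`, each a principal submatrix of `A` and so
positive definite, which makes `C` positive definite. Likewise `J C` is block diagonal with blocks
`J₂ Bⱼ`, which are traceless of determinant `det Bⱼ = αⱼ γⱼ - βⱼ² > 0`, so the eigenvalues of `J C`
are the roots `± i √(αⱼ γⱼ - βⱼ²)` of the polynomials `X² + det Bⱼ`.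
-/

open Matrix Finset

noncomputable section

open Polynomial

namespace Matrix

variable {m o R : Type*} [Fintype m] [DecidableEq o]

theorem charmatrix_blockDiagonal [CommRing R] [DecidableEq m] [Fintype o]
    (B : o → Matrix m m R) :
    charmatrix (blockDiagonal B) = blockDiagonal fun k => charmatrix (B k) := by
  ext ⟨i, k⟩ ⟨j, k'⟩
  by_cases hk : k = k' <;> by_cases hij : i = j <;> simp [blockDiagonal_apply, hk, hij]

theorem charpoly_blockDiagonal [CommRing R] [DecidableEq m] [Fintype o] (B : o → Matrix m m R) :
    (blockDiagonal B).charpoly = ∏ k, (B k).charpoly := by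
  rw [charpoly, charmatrix_blockDiagonal, det_blockDiagonal]
  rfl

theorem dotProduct_blockDiagonal_mulVec [CommSemiring R] [StarRing R] [Fintype o]
    (B : o → Matrix m m R) (x : m × o → R) :
    star x ⬝ᵥ (blockDiagonal B *ᵥ x) =
      ∑ k, star (fun i => x (i, k)) ⬝ᵥ (B k *ᵥ fun i => x (i, k)) := by
  simp only [dotProduct, Pi.star_apply, mulVec, blockDiagonal_apply, ite_mul, zero_mul,
    Fintype.sum_prod_type, sum_ite_eq, mem_univ, ↓reduceIte, mul_sum]
  rw [Finset.sum_comm]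

theorem PosDef.blockDiagonal [CommRing R] [PartialOrder R] [StarRing R]
    [IsOrderedCancelAddMonoid R] [Fintype o] {B : o → Matrix m m R} (hB : ∀ k, (B k).PosDef) :
    (blockDiagonal B).PosDef := by
  have hHerm : (Matrix.blockDiagonal B).IsHermitian := by
    rw [IsHermitian, blockDiagonal_conjTranspose]
    exact congrArg _ (funext fun k => (hB k).isHermitian)
  refine .of_dotProduct_mulVec_pos hHerm fun x hx => ?_
  obtain ⟨⟨i, k⟩, hik⟩ := Function.ne_iff.mp hx
  rw [dotProduct_blockDiagonal_mulVec]
  refine Finset.sum_pos' (fun k _ => (hB k).posSemidef.dotProduct_mulVec_nonneg _)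
    ⟨k, mem_univ k, (hB k).dotProduct_mulVec_pos (Function.ne_iff.mpr ⟨i, hik⟩)⟩

theorem PosDef.pinching_block {ι : Type*} [CommRing R] [PartialOrder R] [StarRing R]
    [TrivialStar R] {A : Matrix (ι ⊕ ι) (ι ⊕ ι) R} (hA : A.PosDef) (j : ι) :
    (!![A (.inl j) (.inl j), A (.inl j) (.inr j);
        A (.inl j) (.inr j), A (.inr j) (.inr j)]).PosDef := by
  have hsymm : A (.inr j) (.inl j) = A (.inl j) (.inr j) := by
    simpa using hA.isHermitian.apply (.inl j) (.inr j)
  have hinj : Function.Injective ![(.inl j : ι ⊕ ι), .inr j] := by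
    intro a b
    fin_cases a <;> fin_cases b <;> simp
  convert hA.submatrix hinj using 1
  ext a b
  fin_cases a <;> fin_cases b <;> simp [hsymm]

theorem charpoly_symplectic_mul_of_isSymm [CommRing R] [Nontrivial R]
    {B : Matrix (Fin 2) (Fin 2) R} (hB : B.IsSymm) :
    (!![0, 1; -1, 0] * B).charpoly = X ^ 2 + C B.det := by
  have h : B 1 0 = B 0 1 := hB.apply 0 1
  rw [charpoly_fin_two, det_mul, trace_fin_two]
  simp [vecMul, dotProduct, Fin.sum_univ_two, h]

end Matrix

theorem Polynomial.roots_X_sq_add_C_ofReal {r : ℝ} (hr : 0 ≤ r) :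
    (X ^ 2 + C (r : ℂ)).roots = {(√r : ℂ) * Complex.I} + {-((√r : ℂ) * Complex.I)} := by
  have hsq : ((√r : ℂ) * Complex.I) ^ 2 = -r := by
    rw [mul_pow, Complex.I_sq, ← Complex.ofReal_pow, Real.sq_sqrt hr, mul_neg_one]
  have hfac : X ^ 2 + C (r : ℂ) =
      (X - C ((√r : ℂ) * Complex.I)) * (X - C (-((√r : ℂ) * Complex.I))) := by
    rw [← neg_neg (r : ℂ), ← hsq, map_neg, map_neg, map_pow]
    ring
  rw [hfac, roots_mul (mul_ne_zero (X_sub_C_ne_zero _) (X_sub_C_ne_zero _)), roots_X_sub_C,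
    roots_X_sub_C]

theorem Matrix.roots_charpoly_symplectic_mul_map_ofReal {B : Matrix (Fin 2) (Fin 2) ℝ}
    (hB : B.IsSymm) (hdet : 0 ≤ B.det) :
    ((!![0, 1; -1, 0] * B).map (Complex.ofReal ·)).charpoly.roots =
      {(√B.det : ℂ) * Complex.I} + {-((√B.det : ℂ) * Complex.I)} := by
  rw [show (fun x : ℝ => (x : ℂ)) = ⇑Complex.ofRealHom from rfl, charpoly_map,
    charpoly_symplectic_mul_of_isSymm hB]
  simpa using roots_X_sq_add_C_ofReal hdet

section ExpandingSum

variable {ι R : Type*} [DecidableEq ι]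

/-- Sends `(0, j)` to `inl j` and `(1, j)` to `inr j`. -/
def finTwoProdEquivSum (ι : Type*) : Fin 2 × ι ≃ ι ⊕ ι :=
  (finTwoEquiv.prodCongr (Equiv.refl ι)).trans (Equiv.boolProdEquivSum ι)

/-- The expanding sum `⊞ⱼ Bⱼ`: entry `(a, b)` of `Bⱼ` becomes the `j`-th diagonal entry of
block `(a, b)` of a `2 × 2` block matrix over `ι ⊕ ι`. -/
def expandingSum [Zero R] (B : ι → Matrix (Fin 2) (Fin 2) R) : Matrix (ι ⊕ ι) (ι ⊕ ι) R :=
  reindex (finTwoProdEquivSum ι) (finTwoProdEquivSum ι) (blockDiagonal B)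

theorem fromBlocks_diagonal_eq_expandingSum [Zero R] (a b c d : ι → R) :
    fromBlocks (diagonal a) (diagonal b) (diagonal c) (diagonal d) =
      expandingSum fun j => !![a j, b j; c j, d j] := by
  ext (i | i) (j | j) <;> by_cases h : i = j <;>
    simp [expandingSum, finTwoProdEquivSum, finTwoEquiv, blockDiagonal_apply, h]

theorem Jm_eq_expandingSum : Jm ι = expandingSum fun _ => !![0, 1; -1, 0] := by
  rw [Jm, ← fromBlocks_diagonal_eq_expandingSum, diagonal_zero, diagonal_one, ← diagonal_neg]
  rfl

theorem expandingSum_mul [Fintype ι] [Semiring R] (B B' : ι → Matrix (Fin 2) (Fin 2) R) :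
    expandingSum B * expandingSum B' = expandingSum fun j => B j * B' j := by
  simp only [expandingSum, reindex_apply, submatrix_mul_equiv, blockDiagonal_mul]

theorem expandingSum_map {S : Type*} [Zero R] [Zero S] (B : ι → Matrix (Fin 2) (Fin 2) R)
    {f : R → S} (hf : f 0 = 0) :
    (expandingSum B).map f = expandingSum fun j => (B j).map f := by
  rw [expandingSum, expandingSum, reindex_apply, reindex_apply, ← submatrix_map,
    blockDiagonal_map _ _ hf]

theorem roots_charpoly_expandingSum [Fintype ι] [CommRing R] [IsDomain R]
    (B : ι → Matrix (Fin 2) (Fin 2) R) :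
    (expandingSum B).charpoly.roots = univ.val.bind fun j => (B j).charpoly.roots := by
  rw [expandingSum, charpoly_reindex, charpoly_blockDiagonal,
    roots_prod _ _ (monic_prod_of_monic _ _ fun j _ => (B j).charpoly_monic).ne_zero]

theorem Matrix.PosDef.expandingSum [Fintype ι] [CommRing R] [PartialOrder R] [StarRing R]
    [IsOrderedCancelAddMonoid R] {B : ι → Matrix (Fin 2) (Fin 2) R} (hB : ∀ j, (B j).PosDef) :
    (expandingSum B).PosDef :=
  (PosDef.blockDiagonal hB).submatrix (finTwoProdEquivSum ι).symm.injective

end ExpandingSum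

theorem pinching_symplectic_eigenvalues {n : ℕ}
    (A : Matrix (Fin n ⊕ Fin n) (Fin n ⊕ Fin n) ℝ) (hA : A.PosDef) :
    let α : Fin n → ℝ := fun j => A (Sum.inl j) (Sum.inl j)
    let β : Fin n → ℝ := fun j => A (Sum.inl j) (Sum.inr j)
    let γ : Fin n → ℝ := fun j => A (Sum.inr j) (Sum.inr j)
    let C : Matrix (Fin n ⊕ Fin n) (Fin n ⊕ Fin n) ℝ :=
      Matrix.fromBlocks (Matrix.diagonal α) (Matrix.diagonal β)
        (Matrix.diagonal β) (Matrix.diagonal γ)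
    C.PosDef ∧
    ((Jm (Fin n) * C).map (Complex.ofReal ·)).charpoly.roots =
      (Finset.univ.val.map fun j => (Real.sqrt (α j * γ j - β j ^ 2) : ℂ) * Complex.I) +
      (Finset.univ.val.map fun j => -((Real.sqrt (α j * γ j - β j ^ 2) : ℂ) * Complex.I)) := by
  intro α β γ C
  set B : Fin n → Matrix (Fin 2) (Fin 2) ℝ := fun j => !![α j, β j; β j, γ j]
  have hC : C = expandingSum B := fromBlocks_diagonal_eq_expandingSum α β β γ
  have hB : ∀ j, (B j).PosDef := hA.pinching_block
  have hdet : ∀ j, (B j).det = α j * γ j - β j ^ 2 := fun j => by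
    rw [det_fin_two_of, sq]
  refine ⟨hC ▸ PosDef.expandingSum hB, ?_⟩
  rw [hC, Jm_eq_expandingSum, expandingSum_mul, expandingSum_map _ Complex.ofReal_zero,
    roots_charpoly_expandingSum]
  simp only [fun j => roots_charpoly_symplectic_mul_map_ofReal
    (isHermitian_iff_isSymm.mp (hB j).isHermitian) (hB j).det_pos.le, hdet]
  rw [Multiset.bind_add, Multiset.bind_singleton, Multiset.bind_singleton]
end
end
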